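/- arXiv:1502.00705 — 2 statements merged into one kernel-verified Lean document; each statement's English description precedes it below -/
import Mathlib

section
/- Let C be the zero set of a trigonometric polynomial with minimal polynomial μ₀. If ν is a trigonometric polynomial such that ν = 0 and ∇ν = 0 at every point of C, then μ₀² divides ν. -/
open MeasureTheory

/-- A trigonometric polynomial, represented by its finitely supported Fourier
coefficients `c : ℤ² →₀ ℂ`; multiplication is convolution of coefficients. -/
noncomputable def trigEval (μ : AddMonoidAlgebra ℂ (ℤ × ℤ)) (r : ℝ × ℝ) : ℂ :=
  ∑ k ∈ μ.coeff.support, μ.coeff k * Complex.exp (2 * Real.pi * Complex.I * (k.1 * r.1 + k.2 * r.2))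

/-- The degree `(K, L)` of a trigonometric polynomial: the dimensions of the smallest
rectangle containing the frequency support. -/
noncomputable def tdeg (μ : AddMonoidAlgebra ℂ (ℤ × ℤ)) : ℤ × ℤ :=
  ((WithBot.unbotD 0 (μ.coeff.support.image Prod.fst).max) - (WithTop.untopD 0 (μ.coeff.support.image Prod.fst).min) + 1,
   (WithBot.unbotD 0 (μ.coeff.support.image Prod.snd).max) - (WithTop.untopD 0 (μ.coeff.support.image Prod.snd).min) + 1)

/-- The zero set of a trigonometric polynomial within the unit square `[0,1]²`. -/
def zeroSet (μ : AddMonoidAlgebra ℂ (ℤ × ℤ)) : Set (ℝ × ℝ) :=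
  {r | r ∈ Set.Icc ((0:ℝ), (0:ℝ)) (1, 1) ∧ trigEval μ r = 0}

/-!
Minimality gives `ν = μ₀ η`, and it makes `μ₀` squarefree: if `μ₀ ∣ ηⁿ` then `η` vanishes on `C`.
Differentiating `e^{2πi⟨k,r⟩}` in a direction `v` multiplies it by `2πi⟨k,v⟩`, so directional
derivatives act on coefficients as the weight derivations `D_v` of `ℂ[ℤ²]`. On `C` the product rule
gives `∂_v ν = η ∂_v μ₀`, hence `μ₀ ∣ η D_v μ₀` for every `v`. In the UFD `ℂ[ℤ²]`, a prime factor `p`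
of the squarefree `μ₀` not dividing `η` would then satisfy `p ∣ D_v p` for all `v`. The ideal `(p)`
would be stable under `D_v - ⟨g,v⟩`, which kills the monomial at `g` and keeps the others; shrinking
supports this way, `(p)` would contain a monomial, which is a unit. So every prime factor of `μ₀`
divides `η`, and `μ₀ ∣ η`.
-/

theorem Derivation.dvd_apply_of_dvd {R A : Type*} [CommSemiring R] [CommSemiring A] [Algebra R A]
    (D : Derivation R A A) {p x : A} (hp : p ∣ D p) (hx : p ∣ x) : p ∣ D x := by
  obtain ⟨t, rfl⟩ := hx
  rw [D.leibniz, smul_eq_mul, smul_eq_mul]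
  exact dvd_add (dvd_mul_right _ _) (hp.mul_left t)

theorem Squarefree.dvd_of_forall_prime_dvd {R : Type*} [CommMonoidWithZero R]
    [UniqueFactorizationMonoid R] {μ η : R} (hμ : Squarefree μ)
    (h : ∀ p, Prime p → p ∣ μ → p ∣ η) : μ ∣ η := by
  induction μ using UniqueFactorizationMonoid.induction_on_prime with
  | h₁ => exact (hμ 0 (by simp)).dvd
  | h₂ u hu => exact hu.dvd
  | h₃ a p _ hp ih =>
    exact (IsRelPrime.of_squarefree_mul hμ).mul_dvd (h p hp (dvd_mul_right p a))
      (ih hμ.of_mul_right fun q hq hqa => h q hq (hqa.mul_left p))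

theorem Squarefree.dvd_of_forall_dvd_mul_derivation {R A ι : Type*} [CommSemiring R] [CommRing A]
    [IsDomain A] [UniqueFactorizationMonoid A] [Algebra R A] (D : ι → Derivation R A A)
    (hD : ∀ p : A, p ≠ 0 → (∀ i, p ∣ D i p) → IsUnit p) {μ η : A} (hμ : Squarefree μ)
    (h : ∀ i, μ ∣ η * D i μ) : μ ∣ η := by
  refine hμ.dvd_of_forall_prime_dvd ?_
  rintro p hp ⟨m, rfl⟩
  have hpm : ¬ p ∣ m := fun hpm => hp.not_isUnit (hμ p (mul_dvd_mul_left p hpm))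
  by_contra hpη
  refine hp.not_isUnit (hD p hp.ne_zero fun i => ?_)
  have hpdvd : p ∣ η * (p * D i m) + η * (m * D i p) := by
    simpa [(D i).leibniz, mul_add] using (dvd_mul_right p m).trans (h i)
  rw [dvd_add_right (dvd_mul_of_dvd_right (dvd_mul_right p _) η)] at hpdvd
  rcases hp.dvd_or_dvd hpdvd with hη | hmD
  · exact absurd hη hpη
  · exact (hp.dvd_or_dvd hmD).resolve_left hpm

instance LaurentPolynomial.instUniqueFactorizationMonoid {R : Type*} [CommRing R] [IsDomain R]
    [UniqueFactorizationMonoid R] : UniqueFactorizationMonoid (LaurentPolynomial R) :=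
  UniqueFactorizationMonoid.of_isLocalization (Submonoid.powers (Polynomial.X : Polynomial R)) _

namespace AddMonoidAlgebra

section CommRing

variable {k G : Type*} [CommRing k] [AddCommMonoid G]

noncomputable def weightDerivation (w : G →+ k) :
    Derivation k (AddMonoidAlgebra k G) (AddMonoidAlgebra k G) :=
  have hsingle (g : G) (c : k) : ofCoeff (⇑w • (single g c).coeff) = single g (w g * c) := by
    ext g'
    rcases eq_or_ne g g' with rfl | h <;> simp [*]
  Derivation.mk'
    { toFun := fun x : AddMonoidAlgebra k G => ofCoeff ((⇑w) • x.coeff)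
      map_add' := fun x y => by ext; simp
      map_smul' := fun c x => by ext; simp [mul_left_comm] }
    (fun x y => by
      induction x using AddMonoidAlgebra.induction_linear with
      | zero => simp
      | add f g hf hg => rw [add_mul, map_add, map_add, hf, hg, add_smul, smul_add]; abel
      | single a b =>
        induction y using AddMonoidAlgebra.induction_linear with
        | zero => simp
        | add f g hf hg => rw [mul_add, map_add, map_add, hf, hg, add_smul, smul_add]; abel
        | single c d =>
          simp only [LinearMap.coe_mk, AddHom.coe_mk, single_mul_single, hsingle, smul_eq_mul]
          rw [map_add, add_comm c, ← single_add]
          ring_nf)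

@[simp] theorem coeff_weightDerivation (w : G →+ k) (x : AddMonoidAlgebra k G) (g : G) :
    (weightDerivation w x).coeff g = w g * x.coeff g := rfl

theorem support_weightDerivation_subset (w : G →+ k) (x : AddMonoidAlgebra k G) :
    (weightDerivation w x).coeff.support ⊆ x.coeff.support := by
  intro g hg
  simp only [Finsupp.mem_support_iff, coeff_weightDerivation] at hg ⊢
  exact right_ne_zero_of_mul hg

theorem coeff_weightDerivation_sub_smul (w : G →+ k) (c : k) (x : AddMonoidAlgebra k G) (g : G) :
    (weightDerivation w x - c • x).coeff g = (w g - c) * x.coeff g := by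
  simp [sub_mul]

theorem card_support_weightDerivation_sub_smul_lt (w : G →+ k) {x : AddMonoidAlgebra k G} {g : G}
    (hg : g ∈ x.coeff.support) :
    (weightDerivation w x - w g • x).coeff.support.card < x.coeff.support.card := by
  refine Finset.card_lt_card (Finset.ssubset_iff_of_subset ?_ |>.2 ⟨g, hg, by simp⟩)
  intro h hh
  simp only [Finsupp.mem_support_iff, coeff_weightDerivation_sub_smul] at hh ⊢
  exact right_ne_zero_of_mul hh

end CommRing

section Field

variable {k G : Type*} [Field k] [AddCommGroup G]

theorem isUnit_single {g : G} {c : k} (hc : c ≠ 0) : IsUnit (single g c) :=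
  .of_mul_eq_one (single (-g) c⁻¹) <| by
    rw [single_mul_single, add_neg_cancel, mul_inv_cancel₀ hc, one_def]

theorem isUnit_of_forall_dvd_weightDerivation {ι : Type*} {w : ι → G →+ k}
    (hw : Function.Injective fun g i => w i g) {p : AddMonoidAlgebra k G} (hp : p ≠ 0)
    (hpD : ∀ i, p ∣ weightDerivation (w i) p) : IsUnit p := by
  suffices ∀ n (x : AddMonoidAlgebra k G), x.coeff.support.card = n → x ≠ 0 → p ∣ x → IsUnit p from
    this _ p rfl hp dvd_rfl
  intro n
  induction n using Nat.strong_induction_on with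
  | _ n ih =>
  rintro x rfl hx hpx
  rcases le_or_gt x.coeff.support.card 1 with hle | hlt
  · obtain ⟨g, c, hxc⟩ := Finsupp.card_support_le_one'.1 hle
    have hx_single : x = single g c := coeff_injective hxc
    have hc : c ≠ 0 := by rintro rfl; simp [hx_single] at hx
    exact isUnit_of_dvd_unit hpx (hx_single ▸ isUnit_single hc)
  obtain ⟨g, hg, g', hg', hne⟩ := Finset.one_lt_card.1 hlt
  obtain ⟨i, hi⟩ : ∃ i, w i g ≠ w i g' := by
    by_contra! h
    exact hne (hw (funext h))
  refine ih _ (card_support_weightDerivation_sub_smul_lt (w i) hg) _ rfl ?_ ?_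
  · intro hy
    refine mul_ne_zero (sub_ne_zero.2 hi.symm) (Finsupp.mem_support_iff.1 hg') ?_
    rw [← coeff_weightDerivation_sub_smul, hy]
    rfl
  · refine dvd_sub ((weightDerivation (w i)).dvd_apply_of_dvd (hpD i) hpx) ?_
    rw [Algebra.smul_def]
    exact hpx.mul_left _

end Field

instance instUniqueFactorizationMonoidIntProd {R : Type*} [CommRing R] [IsDomain R]
    [UniqueFactorizationMonoid R] : UniqueFactorizationMonoid (AddMonoidAlgebra R (ℤ × ℤ)) :=
  (curryRingEquiv (R := R) (M := ℤ) (N := ℤ)).symm.toMulEquiv.uniqueFactorizationMonoid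
    inferInstance

end AddMonoidAlgebra

open AddMonoidAlgebra Complex

def frequencyPairing (v : ℝ × ℝ) : ℤ × ℤ →+ ℂ where
  toFun k := k.1 * v.1 + k.2 * v.2
  map_zero' := by simp
  map_add' k l := by simp only [Prod.fst_add, Prod.snd_add, Int.cast_add]; ring

theorem frequencyPairing_injective : Function.Injective fun k v => frequencyPairing v k := by
  intro k l h
  have h₁ := congrFun h (1, 0)
  have h₂ := congrFun h (0, 1)
  simp only [frequencyPairing, AddMonoidHom.coe_mk, ZeroHom.coe_mk] at h₁ h₂
  exact Prod.ext (by simpa using h₁) (by simpa using h₂)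

noncomputable def trigEvalAlgHom (r : ℝ × ℝ) : AddMonoidAlgebra ℂ (ℤ × ℤ) →ₐ[ℂ] ℂ :=
  AddMonoidAlgebra.lift ℂ ℂ (ℤ × ℤ)
    { toFun := fun k => cexp (2 * Real.pi * I * frequencyPairing r k.toAdd)
      map_one' := by simp
      map_mul' := fun k l => by simp [mul_add, Complex.exp_add] }

theorem trigEvalAlgHom_apply (r : ℝ × ℝ) (μ : AddMonoidAlgebra ℂ (ℤ × ℤ)) :
    trigEvalAlgHom r μ = trigEval μ r := by
  simp [trigEvalAlgHom, AddMonoidAlgebra.lift_apply, trigEval, Finsupp.sum, frequencyPairing]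

theorem squarefree_of_forall_vanishing_dvd {μ : AddMonoidAlgebra ℂ (ℤ × ℤ)} (hμ : μ ≠ 0)
    (hmin : ∀ η, (∀ r ∈ zeroSet μ, trigEval η r = 0) → μ ∣ η) : Squarefree μ := by
  refine IsRadical.squarefree hμ fun n η ⟨c, hc⟩ =>
    hmin η fun r hr => eq_zero_of_pow_eq_zero (n := n) ?_
  rw [← trigEvalAlgHom_apply, ← map_pow, hc, map_mul, trigEvalAlgHom_apply, hr.2, zero_mul]

noncomputable def frequencyCLM (k : ℤ × ℤ) : ℝ × ℝ →L[ℝ] ℂ :=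
  (k.1 : ℂ) • (ofRealCLM.comp (.fst ℝ ℝ ℝ)) + (k.2 : ℂ) • (ofRealCLM.comp (.snd ℝ ℝ ℝ))

@[simp] theorem frequencyCLM_apply (k : ℤ × ℤ) (v : ℝ × ℝ) :
    frequencyCLM k v = frequencyPairing v k := by
  simp [frequencyCLM, frequencyPairing]

theorem hasFDerivAt_trigEval (μ : AddMonoidAlgebra ℂ (ℤ × ℤ)) (r : ℝ × ℝ) :
    HasFDerivAt (trigEval μ)
      (∑ k ∈ μ.coeff.support, (μ.coeff k * cexp (2 * Real.pi * I * frequencyPairing r k) *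
        (2 * Real.pi * I)) • frequencyCLM k) r := by
  refine HasFDerivAt.fun_sum fun k _ => ?_
  have hphase : HasFDerivAt (fun s : ℝ × ℝ => 2 * Real.pi * I * frequencyPairing s k)
      ((2 * Real.pi * I) • frequencyCLM k) r := by
    simpa using ((frequencyCLM k).hasFDerivAt (x := r)).const_mul (2 * Real.pi * I)
  have hterm := hphase.cexp.const_mul (μ.coeff k)
  rw [smul_smul, smul_smul] at hterm
  exact hterm

theorem fderiv_trigEval_apply (μ : AddMonoidAlgebra ℂ (ℤ × ℤ)) (r v : ℝ × ℝ) :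
    fderiv ℝ (trigEval μ) r v =
      2 * Real.pi * I * trigEval (weightDerivation (frequencyPairing v) μ) r := by
  rw [(hasFDerivAt_trigEval μ r).fderiv, ← trigEvalAlgHom_apply, trigEvalAlgHom,
    AddMonoidAlgebra.lift_apply,
    Finsupp.sum_of_support_subset _ (support_weightDerivation_subset _ μ) _ (by simp),
    sum_apply, Finset.mul_sum]
  refine Finset.sum_congr rfl fun k _ => ?_
  simp only [smul_apply, frequencyCLM_apply, smul_eq_mul, coeff_weightDerivation,
    MonoidHom.coe_mk, OneHom.coe_mk, toAdd_ofAdd]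
  ring

theorem trigEval_mul_weightDerivation_eq_zero {μ η : AddMonoidAlgebra ℂ (ℤ × ℤ)} {r : ℝ × ℝ}
    (hμ : trigEval μ r = 0) (hμη : fderiv ℝ (trigEval (μ * η)) r = 0) (v : ℝ × ℝ) :
    trigEval (η * weightDerivation (frequencyPairing v) μ) r = 0 := by
  have h := fderiv_trigEval_apply (μ * η) r v
  rw [hμη, zero_apply, eq_comm, mul_eq_zero, Derivation.leibniz, smul_eq_mul,
    smul_eq_mul] at h
  simp only [← trigEvalAlgHom_apply, map_add, map_mul] at h hμ ⊢
  simpa [hμ] using h.resolve_left two_pi_I_ne_zero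

/-- **Double vanishing implies divisibility by the square of the minimal polynomial.**
Let `C` be the zero set of a trigonometric polynomial with minimal polynomial `μ₀`
(i.e. `μ₀` divides every trigonometric polynomial vanishing on `C`). If `ν` is a
trigonometric polynomial with `ν = 0` and `∇ν = 0` at every point of `C`, then
`μ₀² ∣ ν`. -/
theorem sq_minimal_dvd_of_vanishing_gradient
    (μ₀ ν : AddMonoidAlgebra ℂ (ℤ × ℤ)) (hμ₀ : μ₀ ≠ 0)
    (hmin : ∀ η : AddMonoidAlgebra ℂ (ℤ × ℤ),
      (∀ r ∈ zeroSet μ₀, trigEval η r = 0) → μ₀ ∣ η)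
    (hν0 : ∀ r ∈ zeroSet μ₀, trigEval ν r = 0)
    (hν1 : ∀ r ∈ zeroSet μ₀, fderiv ℝ (trigEval ν) r = 0) :
    μ₀ ^ 2 ∣ ν := by
  obtain ⟨η, rfl⟩ := hmin ν hν0
  rw [sq]
  refine mul_dvd_mul_left μ₀ <|
    (squarefree_of_forall_vanishing_dvd hμ₀ hmin).dvd_of_forall_dvd_mul_derivation
      (fun v => weightDerivation (frequencyPairing v))
      (fun _ => isUnit_of_forall_dvd_weightDerivation frequencyPairing_injective)
      fun v => hmin _ fun r hr => trigEval_mul_weightDerivation_eq_zero hr.2 (hν1 r hr) v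
end

section
/- Let D be an n-th order constant-coefficient partial derivative operator, f = g·χ_Ω with g smooth and Dg = 0 on Ω, and μ a trigonometric polynomial vanishing on ∂Ω. Then μⁿ·Df = 0 as distributions, and consequently the Fourier coefficients of μⁿ annihilate the Fourier transform of Df by convolution. -/
open MeasureTheory

/-- A simply connected region `Ω ⊆ [0,1]²` whose boundary `∂Ω = frontier Ω` is a
piecewise smooth (piecewise C¹) simple closed curve. -/
def IsPSRegion (Ω : Set (ℝ × ℝ)) : Prop :=
  IsOpen Ω ∧ Ω ⊆ Set.Icc ((0:ℝ), (0:ℝ)) (1, 1) ∧ SimplyConnectedSpace ↥Ω ∧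
  ∃ γ : ℝ → ℝ × ℝ, ContinuousOn γ (Set.Icc 0 1) ∧ γ 0 = γ 1 ∧
    Set.InjOn γ (Set.Ico 0 1) ∧ frontier Ω = γ '' Set.Icc 0 1 ∧
    ∃ S : Finset ℝ, ∀ t ∈ Set.Icc (0:ℝ) 1 \ (S : Set ℝ), DifferentiableAt ℝ γ t

/-- Iterated directional derivative: `Dmulti [e₁, …, eₙ] h = ∂_{e₁} ⋯ ∂_{eₙ} h`. -/
noncomputable def Dmulti : List (ℝ × ℝ) → (ℝ × ℝ → ℂ) → (ℝ × ℝ → ℂ)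
  | [], h => h
  | e :: es, h => fun r => fderiv ℝ (Dmulti es h) r e

/-- The (distributional) Fourier transform of `Df`, where `f = g·χ_Ω` and `D` is the
`n`-th order operator given by directions `es`:
`(Df)^(ω) = ∏ⱼ(-i⟨ω,eⱼ⟩) ∫_Ω g(r) e^{-i⟨ω,r⟩} dr`. -/
noncomputable def hatDnf (es : List (ℝ × ℝ)) (g : ℝ × ℝ → ℂ) (Ω : Set (ℝ × ℝ))
    (ω : ℝ × ℝ) : ℂ :=
  (es.map fun e => -Complex.I * (ω.1 * e.1 + ω.2 * e.2)).prod *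
    ∫ r in Ω, g r * Complex.exp (-Complex.I * (ω.1 * r.1 + ω.2 * r.2))

open Set

/-- The character at `r`. -/
noncomputable def tchar (r : ℝ × ℝ) : Multiplicative (ℤ × ℤ) →* ℂ where
  toFun k := Complex.exp (2 * Real.pi * Complex.I *
    ((Multiplicative.toAdd k).1 * r.1 + (Multiplicative.toAdd k).2 * r.2))
  map_one' := by simp
  map_mul' k l := by
    show Complex.exp _ = Complex.exp _ * Complex.exp _
    rw [← Complex.exp_add]
    congr 1
    have h1 : ((Multiplicative.toAdd (k * l)).1 : ℂ) =
        (Multiplicative.toAdd k).1 + (Multiplicative.toAdd l).1 := by rw [toAdd_mul]; push_cast [Prod.fst_add, Prod.snd_add]; ring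
    have h2 : ((Multiplicative.toAdd (k * l)).2 : ℂ) =
        (Multiplicative.toAdd k).2 + (Multiplicative.toAdd l).2 := by rw [toAdd_mul]; push_cast [Prod.fst_add, Prod.snd_add]; ring
    rw [h1, h2]; ring

lemma trigEval_eq_lift (μ : AddMonoidAlgebra ℂ (ℤ × ℤ)) (r : ℝ × ℝ) :
    trigEval μ r = (AddMonoidAlgebra.lift ℂ ℂ (ℤ × ℤ)) (tchar r) μ := by
  rw [AddMonoidAlgebra.lift_apply]
  simp only [Finsupp.sum, smul_eq_mul]
  rfl

lemma trigEval_mul (μ ν : AddMonoidAlgebra ℂ (ℤ × ℤ)) (r : ℝ × ℝ) :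
    trigEval (μ * ν) r = trigEval μ r * trigEval ν r := by
  simp only [trigEval_eq_lift, map_mul]

lemma trigEval_pow (μ : AddMonoidAlgebra ℂ (ℤ × ℤ)) (n : ℕ) (r : ℝ × ℝ) :
    trigEval (μ ^ n) r = trigEval μ r ^ n := by
  simp only [trigEval_eq_lift, map_pow]

lemma trigEval_contDiff (μ : AddMonoidAlgebra ℂ (ℤ × ℤ)) :
    ContDiff ℝ (⊤ : ℕ∞) (trigEval μ) := by
  unfold trigEval
  apply ContDiff.sum
  intro k _
  apply ContDiff.mul contDiff_const
  apply Complex.contDiff_exp.of_le le_top |>.comp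
  apply ContDiff.mul contDiff_const
  have h1 : ContDiff ℝ (⊤ : ℕ∞) (fun r : ℝ × ℝ => (r.1 : ℂ)) :=
    Complex.ofRealCLM.contDiff.comp contDiff_fst
  have h2 : ContDiff ℝ (⊤ : ℕ∞) (fun r : ℝ × ℝ => (r.2 : ℂ)) :=
    Complex.ofRealCLM.contDiff.comp contDiff_snd
  exact (contDiff_const.mul h1).add (contDiff_const.mul h2)

lemma contDiff_top_fderiv {f : ℝ × ℝ → ℂ} (hf : ContDiff ℝ (⊤ : ℕ∞) f) (e : ℝ × ℝ) :
    ContDiff ℝ (⊤ : ℕ∞) (fun r => fderiv ℝ f r e) := by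
  have h1 : ContDiff ℝ (⊤ : ℕ∞) (fderiv ℝ f) := hf.fderiv_right (by simp)
  exact h1.clm_apply contDiff_const

lemma Dmulti_contDiff {h : ℝ × ℝ → ℂ} (hh : ContDiff ℝ (⊤ : ℕ∞) h) :
    ∀ L : List (ℝ × ℝ), ContDiff ℝ (⊤ : ℕ∞) (Dmulti L h)
  | [] => hh
  | e :: L => by
    have := Dmulti_contDiff hh L
    exact contDiff_top_fderiv this e

lemma fderiv_mul_apply {f g : ℝ × ℝ → ℂ} {r e : ℝ × ℝ}
    (hf : DifferentiableAt ℝ f r) (hg : DifferentiableAt ℝ g r) :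
    fderiv ℝ (fun s => f s * g s) r e = fderiv ℝ f r e * g r + f r * fderiv ℝ g r e := by
  rw [fderiv_fun_mul hf hg]
  simp [smul_eq_mul]; ring

lemma Dmulti_sum {ι : Type*} (t : Finset ι) (f : ι → ℝ × ℝ → ℂ)
    (hf : ∀ i ∈ t, ContDiff ℝ (⊤ : ℕ∞) (f i)) :
    ∀ L : List (ℝ × ℝ), ∀ r, Dmulti L (fun s => ∑ i ∈ t, f i s) r = ∑ i ∈ t, Dmulti L (f i) r
  | [], r => rfl
  | e :: L, r => by
    show fderiv ℝ (Dmulti L fun s => ∑ i ∈ t, f i s) r e = _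
    have hfe : (Dmulti L fun s => ∑ i ∈ t, f i s) = fun s => ∑ i ∈ t, Dmulti L (f i) s := by
      funext s; exact Dmulti_sum t f hf L s
    rw [hfe, fderiv_fun_sum (fun i hi => ((Dmulti_contDiff (hf i hi) L).differentiable (by simp)).differentiableAt)]
    simp only [ContinuousLinearMap.coe_sum', Finset.sum_apply]
    rfl

lemma hasFDerivAt_cexp_linear (a b : ℂ) (s : ℝ × ℝ) :
    HasFDerivAt (fun s : ℝ × ℝ => Complex.exp (a * s.1 + b * s.2))
      (Complex.exp (a * s.1 + b * s.2) •
        (a • (Complex.ofRealCLM.comp (ContinuousLinearMap.fst ℝ ℝ ℝ)) +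
         b • (Complex.ofRealCLM.comp (ContinuousLinearMap.snd ℝ ℝ ℝ)))) s := by
  have h1 : HasFDerivAt (fun s : ℝ × ℝ => (s.1 : ℂ))
      (Complex.ofRealCLM.comp (ContinuousLinearMap.fst ℝ ℝ ℝ)) s :=
    (Complex.ofRealCLM.comp (ContinuousLinearMap.fst ℝ ℝ ℝ)).hasFDerivAt
  have h2 : HasFDerivAt (fun s : ℝ × ℝ => (s.2 : ℂ))
      (Complex.ofRealCLM.comp (ContinuousLinearMap.snd ℝ ℝ ℝ)) s :=
    (Complex.ofRealCLM.comp (ContinuousLinearMap.snd ℝ ℝ ℝ)).hasFDerivAt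
  exact ((h1.const_mul a).add (h2.const_mul b)).cexp

lemma cexp_linear_contDiff (a b : ℂ) :
    ContDiff ℝ (⊤ : ℕ∞) (fun s : ℝ × ℝ => Complex.exp (a * s.1 + b * s.2)) := by
  apply (Complex.contDiff_exp.of_le le_top).comp
  exact (contDiff_const.mul (Complex.ofRealCLM.contDiff.comp contDiff_fst)).add
    (contDiff_const.mul (Complex.ofRealCLM.contDiff.comp contDiff_snd))

lemma Dmulti_cexp (a b : ℂ) :
    ∀ L : List (ℝ × ℝ), ∀ r : ℝ × ℝ,
      Dmulti L (fun s => Complex.exp (a * s.1 + b * s.2)) r =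
        (L.map fun e => a * e.1 + b * e.2).prod * Complex.exp (a * r.1 + b * r.2)
  | [], r => by simp [Dmulti]
  | e :: L, r => by
    show fderiv ℝ (Dmulti L fun s => Complex.exp (a * s.1 + b * s.2)) r e = _
    have hfe : (Dmulti L fun s => Complex.exp (a * s.1 + b * s.2)) =
        fun s => (L.map fun e => a * e.1 + b * e.2).prod * Complex.exp (a * s.1 + b * s.2) := by
      funext s; exact Dmulti_cexp a b L s
    rw [hfe]
    have h := ((hasFDerivAt_cexp_linear a b r).const_mul
      ((L.map fun e => a * e.1 + b * e.2).prod)).fderiv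
    rw [h]
    simp only [List.map_cons, List.prod_cons, ContinuousLinearMap.coe_smul', Pi.smul_apply,
      ContinuousLinearMap.add_apply, ContinuousLinearMap.coe_comp',
      Function.comp_apply, ContinuousLinearMap.smul_apply]
    simp only [smul_eq_mul, ContinuousLinearMap.coe_fst', ContinuousLinearMap.coe_snd',
      Complex.ofRealCLM_apply]
    ring

lemma fderiv_fderiv_comm {w : ℝ × ℝ → ℂ} (hw : ContDiff ℝ (⊤ : ℕ∞) w) (r a e : ℝ × ℝ) :
    fderiv ℝ (fun s => fderiv ℝ w s e) r a = fderiv ℝ (fun s => fderiv ℝ w s a) r e := by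
  have hdw : Differentiable ℝ w := hw.differentiable (by simp)
  have hdfw : Differentiable ℝ (fderiv ℝ w) :=
    (hw.fderiv_right (m := (⊤:ℕ∞)) (by simp)).differentiable (by simp)
  have key : ∀ v u : ℝ × ℝ, fderiv ℝ (fun s => fderiv ℝ w s v) r u =
      fderiv ℝ (fderiv ℝ w) r u v := by
    intro v u
    rw [fderiv_clm_apply (hdfw r) (differentiableAt_const v)]
    simp
  rw [key, key]
  exact second_derivative_symmetric (fun y => (hdw y).hasFDerivAt) (hdfw r).hasFDerivAt a e

lemma Dmulti_comm {u : ℝ × ℝ → ℂ} (hu : ContDiff ℝ (⊤ : ℕ∞) u) (e : ℝ × ℝ) :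
    ∀ L : List (ℝ × ℝ), ∀ r, Dmulti L (fun s => fderiv ℝ u s e) r = fderiv ℝ (Dmulti L u) r e
  | [], r => rfl
  | a :: L, r => by
    show fderiv ℝ (Dmulti L fun s => fderiv ℝ u s e) r a = _
    have hfe : (Dmulti L fun s => fderiv ℝ u s e) = fun s => fderiv ℝ (Dmulti L u) s e := by
      funext s; exact Dmulti_comm hu e L s
    rw [hfe]
    exact fderiv_fderiv_comm (Dmulti_contDiff hu L) r a e


/-- A maximal open component of an open set `S ⊆ (0,1)` is an interval with endpoints
in the frontier, so the integral of a derivative over it telescopes to zero. -/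
lemma integral_component_eq_zero (S : Set ℝ) (hS : IsOpen S) (hSb : S ⊆ Set.Ioo 0 1)
    (φ : ℝ → ℂ) (hφ : ContDiff ℝ (⊤ : ℕ∞) φ) (h0 : ∀ x ∈ frontier S, φ x = 0)
    (x : ℝ) (hx : x ∈ S) :
    ∫ t in connectedComponentIn S x, deriv φ t = 0 := by
  set c := connectedComponentIn S x with hc
  have hcS : c ⊆ S := connectedComponentIn_subset S x
  have hxc : x ∈ c := mem_connectedComponentIn hx
  have hco : IsOpen c := hS.connectedComponentIn
  have hcp : IsPreconnected c := isPreconnected_connectedComponentIn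
  have hbdd : BddBelow c := ⟨0, fun y hy => (hSb (hcS hy)).1.le⟩
  have hbdd2 : BddAbove c := ⟨1, fun y hy => (hSb (hcS hy)).2.le⟩
  set a := sInf c with ha
  set b := sSup c with hb
  have hne : c.Nonempty := ⟨x, hxc⟩
  -- c = Ioo a b
  have hceq : c = Set.Ioo a b := by
    apply Set.Subset.antisymm
    · intro y hy
      obtain ⟨ε, hε, hball⟩ := Metric.isOpen_iff.mp hco y hy
      constructor
      · rcases lt_or_eq_of_le (csInf_le hbdd hy) with h | h
        · exact h
        · exfalso
          have : y - ε / 2 ∈ c := hball (by simp [Real.ball_eq_Ioo]; constructor <;> nlinarith)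
          have := csInf_le hbdd this
          rw [← h] at this; linarith
      · rcases lt_or_eq_of_le (le_csSup hbdd2 hy) with h | h
        · exact h
        · exfalso
          have : y + ε / 2 ∈ c := hball (by simp [Real.ball_eq_Ioo]; constructor <;> nlinarith)
          have := le_csSup hbdd2 this
          rw [h] at this; linarith
    · intro y hy
      obtain ⟨z, hz, hzy⟩ := exists_lt_of_csInf_lt hne hy.1
      obtain ⟨w, hw, hyw⟩ := exists_lt_of_lt_csSup hne hy.2
      exact (hcp.ordConnected).out hz hw ⟨hzy.le, hyw.le⟩
  have hab : a < b := by
    have := hceq ▸ hxc; exact lt_trans this.1 this.2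
  -- endpoints are in the frontier
  have hfr : ∀ y : ℝ, y ∈ closure c → y ∉ S → y ∈ frontier S := by
    intro y hyc hyS
    rw [frontier, hS.interior_eq]
    exact ⟨closure_mono hcS hyc, hyS⟩
  have haS : a ∉ S := by
    intro haS'
    obtain ⟨ε, hε, hball⟩ := Metric.isOpen_iff.mp hS a haS'
    have hsub : Set.Ioo (a - ε) b ⊆ S := by
      intro t ht
      rcases le_or_gt t a with h | h
      · exact hball (by simp [Real.ball_eq_Ioo]; constructor <;> [linarith [ht.1]; linarith])
      · exact hcS (hceq ▸ (⟨h, ht.2⟩ : t ∈ Set.Ioo a b))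
    have hxin : x ∈ Set.Ioo (a - ε) b := by
      have := hceq ▸ hxc; exact ⟨by linarith [this.1], this.2⟩
    have := isPreconnected_Ioo.subset_connectedComponentIn hxin hsub
    rw [← hc, hceq] at this
    have : a ∈ Set.Ioo a b := this ⟨by linarith, hab⟩
    exact lt_irrefl a this.1
  have hbS : b ∉ S := by
    intro hbS'
    obtain ⟨ε, hε, hball⟩ := Metric.isOpen_iff.mp hS b hbS'
    have hsub : Set.Ioo a (b + ε) ⊆ S := by
      intro t ht
      rcases lt_or_ge t b with h | h
      · exact hcS (hceq ▸ (⟨ht.1, h⟩ : t ∈ Set.Ioo a b))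
      · exact hball (by simp [Real.ball_eq_Ioo]; constructor <;> [linarith; linarith [ht.2]])
    have hxin : x ∈ Set.Ioo a (b + ε) := by
      have := hceq ▸ hxc; exact ⟨this.1, by linarith [this.2]⟩
    have := isPreconnected_Ioo.subset_connectedComponentIn hxin hsub
    rw [← hc, hceq] at this
    have : b ∈ Set.Ioo a b := this ⟨hab, by linarith⟩
    exact lt_irrefl b this.2
  have hacl : a ∈ closure c := by
    rw [hceq, closure_Ioo hab.ne]; exact ⟨le_refl a, hab.le⟩
  have hbcl : b ∈ closure c := by
    rw [hceq, closure_Ioo hab.ne]; exact ⟨hab.le, le_refl b⟩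
  have hφa : φ a = 0 := h0 a (hfr a hacl haS)
  have hφb : φ b = 0 := h0 b (hfr b hbcl hbS)
  -- FTC
  have hFTC : ∫ t in a..b, deriv φ t = φ b - φ a := by
    apply intervalIntegral.integral_deriv_eq_sub
    · intro t _
      exact (hφ.differentiable (by simp)).differentiableAt
    · exact (hφ.continuous_deriv (by exact_mod_cast le_top)).intervalIntegrable a b
  rw [hceq, ← MeasureTheory.integral_Ioc_eq_integral_Ioo, ← intervalIntegral.integral_of_le hab.le,
    hFTC, hφa, hφb, sub_zero]

lemma key1d (S : Set ℝ) (hS : IsOpen S) (hSb : S ⊆ Set.Ioo 0 1)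
    (φ : ℝ → ℂ) (hφ : ContDiff ℝ (⊤ : ℕ∞) φ) (h0 : ∀ x ∈ frontier S, φ x = 0) :
    ∫ x in S, deriv φ x = 0 := by
  classical
  set C : Set (Set ℝ) := (connectedComponentIn S) '' S with hC
  have hmem : ∀ c ∈ C, ∃ x ∈ S, c = connectedComponentIn S x := by
    intro c hc; obtain ⟨x, hx, rfl⟩ := hc; exact ⟨x, hx, rfl⟩
  have hdisj : ∀ c ∈ C, ∀ c' ∈ C, c ≠ c' → Disjoint c c' := by
    intro c hc c' hc' hne
    obtain ⟨x, hx, rfl⟩ := hmem c hc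
    obtain ⟨y, hy, rfl⟩ := hmem c' hc'
    by_contra hd
    obtain ⟨z, hz1, hz2⟩ := Set.not_disjoint_iff.mp hd
    exact hne ((connectedComponentIn_eq hz1).trans (connectedComponentIn_eq hz2).symm)
  have hCne : ∀ c : ↥C, ∃ q : ℚ, (q : ℝ) ∈ (c : Set ℝ) := by
    rintro ⟨c, hc⟩
    obtain ⟨x, hx, rfl⟩ := hmem c hc
    have hxc := mem_connectedComponentIn hx
    obtain ⟨ε, hε, hball⟩ := Metric.isOpen_iff.mp hS.connectedComponentIn x hxc
    obtain ⟨q, hq1, hq2⟩ := exists_rat_btwn (show x - ε/2 < x by linarith)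
    exact ⟨q, hball (by simp [Real.ball_eq_Ioo]; constructor <;> nlinarith)⟩
  have hcount : Countable ↥C := by
    choose f hf using hCne
    have hinj : Function.Injective f := by
      intro c c' h
      by_contra hne
      have hne' : (c : Set ℝ) ≠ (c' : Set ℝ) := fun h' => hne (Subtype.ext h')
      have := hdisj c c.2 c' c'.2 hne'
      exact Set.not_disjoint_iff.mpr ⟨(f c : ℝ), hf c, h ▸ hf c'⟩ this
    exact Function.Injective.countable hinj
  have hunion : ⋃ (c : ↥C), (c : Set ℝ) = S := by
    apply Set.Subset.antisymm
    · apply Set.iUnion_subset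
      rintro ⟨c, hc⟩
      obtain ⟨x, hx, rfl⟩ := hmem c hc
      exact connectedComponentIn_subset S x
    · intro x hx
      exact Set.mem_iUnion.mpr ⟨⟨_, ⟨x, hx, rfl⟩⟩, mem_connectedComponentIn hx⟩
  have hopen : ∀ c : ↥C, IsOpen (c : Set ℝ) := by
    rintro ⟨c, hc⟩; obtain ⟨x, hx, rfl⟩ := hmem c hc; exact hS.connectedComponentIn
  have hint : IntegrableOn (deriv φ) S := by
    have h1 : IntegrableOn (deriv φ) (Set.Icc 0 1) :=
      ((hφ.continuous_deriv (by exact_mod_cast le_top)).continuousOn).integrableOn_compact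
        isCompact_Icc
    exact h1.mono_set (hSb.trans Set.Ioo_subset_Icc_self)
  rw [← hunion, MeasureTheory.integral_iUnion (fun c => (hopen c).measurableSet)
    (fun c c' hne => hdisj _ c.2 _ c'.2 (fun h => hne (Subtype.ext h)))
    (by rw [hunion]; exact hint)]
  have hzero : ∀ c : ↥C, ∫ x in (c : Set ℝ), deriv φ x = 0 := by
    rintro ⟨c, hc⟩
    obtain ⟨x, hx, rfl⟩ := hmem c hc
    exact integral_component_eq_zero S hS hSb φ hφ h0 x hx
  simp [hzero]


-- Chunk 6: the 2-D "integral of a derivative vanishes" lemma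
lemma key2d_snd (Ω : Set (ℝ × ℝ)) (hΩo : IsOpen Ω)
    (hΩb : Ω ⊆ Set.Icc ((0:ℝ), (0:ℝ)) (1, 1))
    (F : ℝ × ℝ → ℂ) (hF : ContDiff ℝ (⊤ : ℕ∞) F)
    (hF0 : ∀ r ∈ frontier Ω, F r = 0) :
    ∫ r in Ω, fderiv ℝ F r (0, 1) = 0 := by
  set G : ℝ × ℝ → ℂ := fun r => fderiv ℝ F r (0, 1) with hG
  have hGc : Continuous G := (contDiff_top_fderiv hF (0, 1)).continuous
  have hΩ' : Ω ⊆ Set.Ioo (0:ℝ) 1 ×ˢ Set.Ioo (0:ℝ) 1 := by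
    have h1 : Ω ⊆ interior (Set.Icc ((0:ℝ), (0:ℝ)) (1, 1)) :=
      hΩo.subset_interior_iff.mpr hΩb
    rw [Set.Icc_prod_eq, interior_prod_eq, interior_Icc] at h1
    simpa using h1
  have hintOn : IntegrableOn G Ω := by
    have h1 : IntegrableOn G (Set.Icc ((0:ℝ), (0:ℝ)) (1, 1)) :=
      hGc.continuousOn.integrableOn_compact isCompact_Icc
    exact h1.mono_set hΩb
  have hmeas : MeasurableSet Ω := hΩo.measurableSet
  rw [← MeasureTheory.integral_indicator hmeas]
  rw [MeasureTheory.Measure.volume_eq_prod]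
  rw [MeasureTheory.integral_prod _ (by
    rw [← MeasureTheory.Measure.volume_eq_prod]
    exact (integrable_indicator_iff hmeas).mpr hintOn)]
  have hinner : ∀ x : ℝ, ∫ y : ℝ, Ω.indicator G (x, y) = 0 := by
    intro x
    set S : Set ℝ := (fun y => (x, y)) ⁻¹' Ω with hS
    have hcont : Continuous (fun y : ℝ => (x, y)) := Continuous.prodMk_right x
    have hSo : IsOpen S := hΩo.preimage hcont
    have hSb : S ⊆ Set.Ioo 0 1 := fun y hy => (hΩ' hy).2
    set φ : ℝ → ℂ := fun y => F (x, y) with hφdef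
    have hφ : ContDiff ℝ (⊤ : ℕ∞) φ := hF.comp (contDiff_const.prodMk contDiff_id)
    have hfrS : ∀ y ∈ frontier S, φ y = 0 := by
      intro y hy
      apply hF0
      rw [hSo.frontier_eq] at hy
      have h1 : (x, y) ∈ closure Ω := hcont.closure_preimage_subset Ω hy.1
      rw [frontier, hΩo.interior_eq]
      exact ⟨h1, hy.2⟩
    have hderiv : ∀ y : ℝ, deriv φ y = G (x, y) := by
      intro y
      have h1 : HasDerivAt (fun y : ℝ => (x, y)) ((0:ℝ), (1:ℝ)) y :=
        (hasDerivAt_const y x).prodMk (hasDerivAt_id y)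
      have h2 : HasDerivAt φ (fderiv ℝ F (x, y) (0, 1)) y :=
        ((hF.differentiable (by simp)) (x, y)).hasFDerivAt.comp_hasDerivAt y h1
      exact h2.deriv
    have hind : ∀ y : ℝ, Ω.indicator G (x, y) = S.indicator (fun y => deriv φ y) y := by
      intro y
      by_cases h : (x, y) ∈ Ω
      · rw [Set.indicator_of_mem h, Set.indicator_of_mem (show y ∈ S from h)]
        exact (hderiv y).symm
      · rw [Set.indicator_of_notMem h, Set.indicator_of_notMem (show y ∉ S from h)]
    calc ∫ y : ℝ, Ω.indicator G (x, y) = ∫ y : ℝ, S.indicator (fun y => deriv φ y) y := by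
          exact congrArg _ (funext hind)
      _ = ∫ y in S, deriv φ y := MeasureTheory.integral_indicator hSo.measurableSet
      _ = 0 := key1d S hSo hSb φ hφ hfrS
  exact (integral_congr_ae (Filter.Eventually.of_forall hinner)).trans (integral_zero _ _)


lemma key2d (Ω : Set (ℝ × ℝ)) (hΩo : IsOpen Ω)
    (hΩb : Ω ⊆ Set.Icc ((0:ℝ), (0:ℝ)) (1, 1))
    (F : ℝ × ℝ → ℂ) (hF : ContDiff ℝ (⊤ : ℕ∞) F)
    (hF0 : ∀ r ∈ frontier Ω, F r = 0) (e : ℝ × ℝ)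
    (he : e = ((1:ℝ), (0:ℝ)) ∨ e = ((0:ℝ), (1:ℝ))) :
    ∫ r in Ω, fderiv ℝ F r e = 0 := by
  rcases he with rfl | rfl
  · -- swap coordinates and use `key2d_snd`
    set σ : ℝ × ℝ → ℝ × ℝ := Prod.swap with hσ
    set P : (ℝ × ℝ) ≃L[ℝ] ℝ × ℝ := ContinuousLinearEquiv.prodComm ℝ ℝ ℝ with hP
    set Ω' : Set (ℝ × ℝ) := σ ⁻¹' Ω with hΩ'
    set F' : ℝ × ℝ → ℂ := fun r => F (σ r) with hF'
    have hσc : Continuous σ := continuous_swap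
    have hΩ'o : IsOpen Ω' := hΩo.preimage hσc
    have hΩ'b : Ω' ⊆ Set.Icc ((0:ℝ), (0:ℝ)) (1, 1) := by
      intro r hr
      have := hΩb hr
      exact ⟨⟨this.1.2, this.1.1⟩, ⟨this.2.2, this.2.1⟩⟩
    have hF'c : ContDiff ℝ (⊤ : ℕ∞) F' := hF.comp (contDiff_snd.prodMk contDiff_fst)
    have hfr : frontier Ω' = σ ⁻¹' frontier Ω :=
      ((Homeomorph.prodComm ℝ ℝ).isOpenMap.preimage_frontier_eq_frontier_preimage
        (Homeomorph.prodComm ℝ ℝ).continuous Ω).symm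
    have hF'0 : ∀ r ∈ frontier Ω', F' r = 0 := by
      intro r hr; rw [hfr] at hr; exact hF0 _ hr
    have hfd : ∀ r : ℝ × ℝ, fderiv ℝ F' r ((0:ℝ), (1:ℝ)) = fderiv ℝ F (σ r) ((1:ℝ), (0:ℝ)) := by
      intro r
      have h1 : HasFDerivAt σ (P : (ℝ × ℝ) →L[ℝ] ℝ × ℝ) r := P.hasFDerivAt
      have h2 : HasFDerivAt F (fderiv ℝ F (σ r)) (σ r) :=
        ((hF.differentiable (by simp)) (σ r)).hasFDerivAt
      have h3 : HasFDerivAt F' ((fderiv ℝ F (σ r)).comp (P : (ℝ × ℝ) →L[ℝ] ℝ × ℝ)) r :=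
        h2.comp r h1
      rw [h3.fderiv]
      rfl
    have h0 := key2d_snd Ω' hΩ'o hΩ'b F' hF'c hF'0
    have heq : ∫ r in Ω', fderiv ℝ F' r ((0:ℝ), (1:ℝ)) =
        ∫ r in Ω', (fun s => fderiv ℝ F s ((1:ℝ), (0:ℝ))) (σ r) := by
      apply MeasureTheory.setIntegral_congr_fun hΩ'o.measurableSet
      intro r _; exact hfd r
    have hswap : ∫ r in Ω', (fun s => fderiv ℝ F s ((1:ℝ), (0:ℝ))) (σ r) =
        ∫ s in Ω, fderiv ℝ F s ((1:ℝ), (0:ℝ)) := by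
      have hmp : MeasurePreserving σ (volume : Measure (ℝ × ℝ)) volume := by
        rw [MeasureTheory.Measure.volume_eq_prod]
        exact MeasureTheory.Measure.measurePreserving_swap
      exact MeasureTheory.MeasurePreserving.setIntegral_preimage_emb (μ := (volume : Measure (ℝ × ℝ)))
        (ν := (volume : Measure (ℝ × ℝ))) hmp
        (MeasurableEquiv.prodComm : ℝ × ℝ ≃ᵐ ℝ × ℝ).measurableEmbedding
        (fun s => fderiv ℝ F s ((1:ℝ), (0:ℝ))) Ω
    rw [← hswap, ← heq, h0]
  · exact key2d_snd Ω hΩo hΩb F hF hF0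


lemma fderiv_pow_apply {q : ℝ × ℝ → ℂ} (hq : ContDiff ℝ (⊤ : ℕ∞) q) (m : ℕ) (r e : ℝ × ℝ) :
    fderiv ℝ (fun s => q s ^ (m + 1)) r e = (m + 1 : ℂ) * q r ^ m * fderiv ℝ q r e := by
  induction m with
  | zero => simp only [pow_one, zero_add, pow_zero, Nat.cast_zero]; ring_nf
  | succ k ih =>
    have hrw : (fun s => q s ^ (k + 1 + 1)) = fun s => q s * q s ^ (k + 1) := by
      funext s; rw [pow_succ']
    rw [hrw, fderiv_mul_apply (hq.differentiable (by simp)).differentiableAt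
      ((hq.pow (k+1)).differentiable (by simp)).differentiableAt, ih]
    push_cast
    ring

/-- Derivatives of order `≤ L.length` of `μ^(L.length + j) * h` retain a factor `μ^j`. -/
lemma Dmulti_pow_factor (μ : AddMonoidAlgebra ℂ (ℤ × ℤ)) :
    ∀ L : List (ℝ × ℝ), ∀ j : ℕ, ∀ h : ℝ × ℝ → ℂ, ContDiff ℝ (⊤ : ℕ∞) h →
      ∃ v : ℝ × ℝ → ℂ, ContDiff ℝ (⊤ : ℕ∞) v ∧
        ∀ r, Dmulti L (fun s => trigEval μ s ^ (L.length + j) * h s) r =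
          trigEval μ r ^ j * v r
  | [], j, h, hh => ⟨h, hh, fun r => by simp [Dmulti]⟩
  | e :: L, j, h, hh => by
    obtain ⟨v, hv, hveq⟩ := Dmulti_pow_factor μ L (j + 1) h hh
    have hexp : (e :: L).length + j = L.length + (j + 1) := by
      simp [List.length_cons]; ring
    refine ⟨fun r => (j + 1 : ℂ) * fderiv ℝ (trigEval μ) r e * v r +
      trigEval μ r * fderiv ℝ v r e, ?_, ?_⟩
    · exact ((contDiff_const.mul (contDiff_top_fderiv (trigEval_contDiff μ) e)).mul hv).add
        ((trigEval_contDiff μ).mul (contDiff_top_fderiv hv e))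
    · intro r
      show fderiv ℝ (Dmulti L fun s => trigEval μ s ^ ((e :: L).length + j) * h s) r e = _
      have hfe : (Dmulti L fun s => trigEval μ s ^ ((e :: L).length + j) * h s) =
          fun s => trigEval μ s ^ (j + 1) * v s := by
        funext s; rw [hexp]; exact hveq s
      rw [hfe, fderiv_mul_apply
        (((trigEval_contDiff μ).pow (j+1)).differentiable (by simp)).differentiableAt
        (hv.differentiable (by simp)).differentiableAt,
        fderiv_pow_apply (trigEval_contDiff μ) j]
      ring

lemma main_ind (Ω : Set (ℝ × ℝ)) (hΩo : IsOpen Ω)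
    (hΩb : Ω ⊆ Set.Icc ((0:ℝ), (0:ℝ)) (1, 1))
    (μ : AddMonoidAlgebra ℂ (ℤ × ℤ)) (hμ : ∀ r ∈ frontier Ω, trigEval μ r = 0) :
    ∀ es : List (ℝ × ℝ), (∀ e ∈ es, e = ((1:ℝ), (0:ℝ)) ∨ e = ((0:ℝ), (1:ℝ))) →
      ∀ g h : ℝ × ℝ → ℂ, ContDiff ℝ (⊤ : ℕ∞) g → ContDiff ℝ (⊤ : ℕ∞) h →
      (∀ r ∈ Ω, Dmulti es g r = 0) →
      ∫ r in Ω, g r * Dmulti es (fun s => trigEval μ s ^ es.length * h s) r = 0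
  | [], hb, g, h, hg, hh, hDg => by
    rw [MeasureTheory.setIntegral_congr_fun hΩo.measurableSet
      (g := fun _ => (0:ℂ)) (fun r hr => by
        have h0 : g r = 0 := hDg r hr
        show g r * _ = 0
        rw [h0, zero_mul])]
    simp
  | e :: es, hb, g, h, hg, hh, hDg => by
    set n := (e :: es).length with hn
    have hμh : ContDiff ℝ (⊤ : ℕ∞) (fun s => trigEval μ s ^ n * h s) :=
      ((trigEval_contDiff μ).pow n).mul hh
    set P : ℝ × ℝ → ℂ := Dmulti es (fun s => trigEval μ s ^ n * h s) with hP
    have hPc : ContDiff ℝ (⊤ : ℕ∞) P := Dmulti_contDiff hμh es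
    have hgP : ContDiff ℝ (⊤ : ℕ∞) (fun s => g s * P s) := hg.mul hPc
    -- pointwise product rule
    have hpt : ∀ r : ℝ × ℝ, g r * Dmulti (e :: es) (fun s => trigEval μ s ^ n * h s) r =
        fderiv ℝ (fun s => g s * P s) r e - fderiv ℝ g r e * P r := by
      intro r
      have : Dmulti (e :: es) (fun s => trigEval μ s ^ n * h s) r = fderiv ℝ P r e := rfl
      rw [this, fderiv_mul_apply (hg.differentiable (by simp)).differentiableAt
        (hPc.differentiable (by simp)).differentiableAt]
      ring
    -- integrability of the two pieces
    have hintable : ∀ G : ℝ × ℝ → ℂ, Continuous G → IntegrableOn G Ω := by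
      intro G hGc
      exact (hGc.continuousOn.integrableOn_compact isCompact_Icc).mono_set hΩb
    have hint1 : IntegrableOn (fun r => fderiv ℝ (fun s => g s * P s) r e) Ω :=
      hintable _ (contDiff_top_fderiv hgP e).continuous
    have hint2 : IntegrableOn (fun r => fderiv ℝ g r e * P r) Ω :=
      hintable _ ((contDiff_top_fderiv hg e).continuous.mul hPc.continuous)
    rw [MeasureTheory.setIntegral_congr_fun hΩo.measurableSet (fun r _ => hpt r),
      MeasureTheory.integral_sub hint1 hint2]
    -- first piece: boundary term vanishes
    have hbd : ∫ r in Ω, fderiv ℝ (fun s => g s * P s) r e = 0 := by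
      apply key2d Ω hΩo hΩb _ hgP _ e (hb e (by simp))
      intro r hr
      obtain ⟨v, hv, hveq⟩ := Dmulti_pow_factor μ es 1 h hh
      have : P r = trigEval μ r ^ 1 * v r := by
        rw [hP]
        have : n = es.length + 1 := by simp [hn]
        rw [show (fun s => trigEval μ s ^ n * h s) =
          (fun s => trigEval μ s ^ (es.length + 1) * h s) from by rw [this]]
        exact hveq r
      simp only [this, pow_one, hμ r hr]
      ring
    -- second piece: induction hypothesis
    have hih : ∫ r in Ω, fderiv ℝ g r e * P r = 0 := by
      have hfun : (fun s => trigEval μ s ^ n * h s) =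
          (fun s => trigEval μ s ^ es.length * (trigEval μ s * h s)) := by
        funext s
        rw [show n = es.length + 1 from by simp [hn], pow_succ]
        ring
      have hPalt : P = Dmulti es (fun s => trigEval μ s ^ es.length * (trigEval μ s * h s)) := by
        rw [hP, hfun]
      rw [hPalt]
      apply main_ind Ω hΩo hΩb μ hμ es (fun e' he' => hb e' (by simp [he']))
        (fun r => fderiv ℝ g r e) (fun s => trigEval μ s * h s)
        (contDiff_top_fderiv hg e) ((trigEval_contDiff μ).mul hh)
      intro r hr
      rw [Dmulti_comm hg e es r]
      exact hDg r hr
    rw [hbd, hih, sub_zero]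

lemma Dmulti_const_mul (c : ℂ) {u : ℝ × ℝ → ℂ} (hu : ContDiff ℝ (⊤ : ℕ∞) u) :
    ∀ L : List (ℝ × ℝ), ∀ r, Dmulti L (fun s => c * u s) r = c * Dmulti L u r
  | [], r => rfl
  | e :: L, r => by
    show fderiv ℝ (Dmulti L fun s => c * u s) r e = _
    have hfe : (Dmulti L fun s => c * u s) = fun s => c * Dmulti L u s := by
      funext s; exact Dmulti_const_mul c hu L s
    rw [hfe, fderiv_const_mul ((Dmulti_contDiff hu L).differentiable
      (by simp)).differentiableAt c]
    rw [ContinuousLinearMap.smul_apply, smul_eq_mul]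
    rfl


/-- **Annihilation for piecewise smooth pieces, arbitrary order.**
Let `D` be an `n`-th order constant-coefficient partial derivative operator (an iterated
composition of `∂ₓ, ∂_y` given by a length-`n` list of directions `es`), let `f = g·χ_Ω`
with `g` smooth and `Dg = 0` on `Ω`, and let the trigonometric polynomial `μ` vanish on
`∂Ω`. Then `μⁿ·Df = 0` as distributions (`⟨Df, μⁿφ⟩ = ±∫_Ω g·D(μⁿφ) = 0` for all smooth
test `φ`), and consequently the Fourier coefficients `d[k] = (μⁿ) k`, `k ∈ Γ`, of `μⁿ`
annihilate `(Df)^` by convolution: `∑_{k∈Γ} d[k] (Df)^(ω − 2πk) = 0` for all `ω`. -/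
theorem annihilation_nth_order_piecewise
    (Ω : Set (ℝ × ℝ)) (hΩ : IsPSRegion Ω)
    (g : ℝ × ℝ → ℂ) (hg : ContDiff ℝ (⊤ : ℕ∞) g)
    (es : List (ℝ × ℝ))
    (hes : ∀ e ∈ es, e = ((1:ℝ), (0:ℝ)) ∨ e = ((0:ℝ), (1:ℝ)))
    (hDg : ∀ r ∈ Ω, Dmulti es g r = 0)
    (μ : AddMonoidAlgebra ℂ (ℤ × ℤ))
    (hμ : ∀ r ∈ frontier Ω, trigEval μ r = 0) :
    (∀ φ : ℝ × ℝ → ℂ, ContDiff ℝ (⊤ : ℕ∞) φ →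
      ∫ r in Ω, g r * Dmulti es (fun s => trigEval (μ ^ es.length) s * φ s) r = 0) ∧
    (∀ ω : ℝ × ℝ,
      ∑ k ∈ (μ ^ es.length).coeff.support, (μ ^ es.length).coeff k *
        hatDnf es g Ω (ω.1 - 2 * Real.pi * k.1, ω.2 - 2 * Real.pi * k.2) = 0) := by
  obtain ⟨hΩo, hΩb, -⟩ := hΩ
  have hg' : ContDiff ℝ (⊤ : ℕ∞) g := hg.of_le (by simp)
  set n := es.length with hn
  have hmain : ∀ φ : ℝ × ℝ → ℂ, ContDiff ℝ (⊤ : ℕ∞) φ →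
      ∫ r in Ω, g r * Dmulti es (fun s => trigEval (μ ^ n) s * φ s) r = 0 := by
    intro φ hφ
    have hfun : (fun s => trigEval (μ ^ n) s * φ s) = fun s => trigEval μ s ^ n * φ s := by
      funext s; rw [trigEval_pow]
    rw [hfun]
    exact main_ind Ω hΩo hΩb μ hμ es hes g φ hg' hφ hDg
  constructor
  · intro φ hφ
    exact hmain φ (hφ.of_le (by simp))
  · intro ω
    set ν := μ ^ n with hν
    set aω : ℂ := -Complex.I * ω.1 with haω
    set bω : ℂ := -Complex.I * ω.2 with hbω
    set A : ℤ × ℤ → ℂ := fun k => 2 * Real.pi * Complex.I * k.1 + aω with hA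
    set B : ℤ × ℤ → ℂ := fun k => 2 * Real.pi * Complex.I * k.2 + bω with hB
    set φω : ℝ × ℝ → ℂ := fun s => Complex.exp (aω * s.1 + bω * s.2) with hφω
    have hφωc : ContDiff ℝ (⊤ : ℕ∞) φω := cexp_linear_contDiff aω bω
    have h1 : ∫ r in Ω, g r * Dmulti es (fun s => trigEval ν s * φω s) r = 0 := by
      have hfun : (fun s => trigEval ν s * φω s) = fun s => trigEval μ s ^ n * φω s := by
        funext s; rw [trigEval_pow]
      rw [hfun]
      exact main_ind Ω hΩo hΩb μ hμ es hes g φω hg' hφωc hDg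
    -- rewrite the integrand as a finite sum of exponentials
    have hsum : (fun s : ℝ × ℝ => trigEval ν s * φω s) =
        fun s => ∑ k ∈ ν.coeff.support, ν.coeff k * Complex.exp (A k * s.1 + B k * s.2) := by
      funext s
      rw [trigEval, Finset.sum_mul]
      apply Finset.sum_congr rfl
      intro k _
      rw [mul_assoc, ← Complex.exp_add]
      congr 1
      rw [hA, hB, haω, hbω]
      push_cast
      ring
    have hsmooth : ∀ k ∈ ν.coeff.support, ContDiff ℝ (⊤ : ℕ∞)
        (fun s : ℝ × ℝ => ν.coeff k * Complex.exp (A k * s.1 + B k * s.2)) :=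
      fun k _ => contDiff_const.mul (cexp_linear_contDiff (A k) (B k))
    have h2 : ∀ r : ℝ × ℝ, Dmulti es (fun s => trigEval ν s * φω s) r =
        ∑ k ∈ ν.coeff.support, ν.coeff k * ((es.map fun e => A k * e.1 + B k * e.2).prod *
          Complex.exp (A k * r.1 + B k * r.2)) := by
      intro r
      rw [hsum, Dmulti_sum ν.coeff.support _ hsmooth es r]
      apply Finset.sum_congr rfl
      intro k _
      rw [Dmulti_const_mul (ν.coeff k) (cexp_linear_contDiff (A k) (B k)) es r, Dmulti_cexp]
    have h3 : ∫ r in Ω, g r * Dmulti es (fun s => trigEval ν s * φω s) r =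
        ∑ k ∈ ν.coeff.support, ν.coeff k * ((es.map fun e => A k * e.1 + B k * e.2).prod *
          ∫ r in Ω, g r * Complex.exp (A k * r.1 + B k * r.2)) := by
      have hintable : ∀ G : ℝ × ℝ → ℂ, Continuous G → IntegrableOn G Ω :=
        fun G hGc => (hGc.continuousOn.integrableOn_compact isCompact_Icc).mono_set hΩb
      rw [MeasureTheory.setIntegral_congr_fun hΩo.measurableSet
        (g := fun r => ∑ k ∈ ν.coeff.support, ν.coeff k * (es.map fun e => A k * e.1 + B k * e.2).prod *
          (g r * Complex.exp (A k * r.1 + B k * r.2)))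
        (fun r _ => by rw [h2 r, Finset.mul_sum]; apply Finset.sum_congr rfl; intro k _; ring)]
      rw [MeasureTheory.integral_finset_sum _ (fun k _ => by
        apply Integrable.const_mul
        exact hintable _ (hg'.continuous.mul (cexp_linear_contDiff (A k) (B k)).continuous))]
      apply Finset.sum_congr rfl
      intro k _
      rw [MeasureTheory.integral_const_mul, mul_assoc]
    -- identify each term with `hatDnf`
    have h4 : ∀ k ∈ ν.coeff.support, ν.coeff k * hatDnf es g Ω
        (ω.1 - 2 * Real.pi * k.1, ω.2 - 2 * Real.pi * k.2) =
        ν.coeff k * ((es.map fun e => A k * e.1 + B k * e.2).prod *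
          ∫ r in Ω, g r * Complex.exp (A k * r.1 + B k * r.2)) := by
      intro k _
      rw [hatDnf]
      congr 2
      · congr 1
        apply List.map_congr_left
        intro e _
        show -Complex.I * (((ω.1 - 2 * Real.pi * k.1 : ℝ) : ℂ) * e.1 +
          ((ω.2 - 2 * Real.pi * k.2 : ℝ) : ℂ) * e.2) = A k * e.1 + B k * e.2
        rw [hA, hB, haω, hbω]
        push_cast
        ring
      · apply MeasureTheory.setIntegral_congr_fun hΩo.measurableSet
        intro r _
        congr 1
        congr 1
        rw [hA, hB, haω, hbω]
        push_cast
        ring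
    rw [Finset.sum_congr rfl h4]
    rw [← h3]
    exact h1
end
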